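/- Let A_1, …, A_n be nonempty sets and X = ∏_{i=1}^{n} A_i, let f : X → ℝ, and let S_1, …, S_K be pairwise disjoint subsets of {1, …, n} whose union is {1, …, n}. Fix a reference point x* ∈ X and define, for each k, the surrogate g_k on ∏_{i ∈ S_k} A_i by g_k(u) = f(z), where z agrees with x* outside S_k and with u on S_k. Suppose there are constants c_k ≥ 0 such that for all u, v ∈ X that agree outside S_k, |(f(u) − f(v)) − (g_k(u|_{S_k}) − g_k(v|_{S_k}))| ≤ c_k. Then for all x, y ∈ X, f(x) − f(y) ≤ ∑_{k=1}^{K} [ g_k(x|_{S_k}) − g_k(y|_{S_k}) ] + ∑_{k=1}^{K} c_k. -/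
import Mathlib


/-- Decomposed regret upper bound: with surrogate subproblem objectives `g k`
obtained by fixing variables outside block `S k` to the reference point `xstar`,
and a bounded-coupling hypothesis with constants `c k`, the difference
`f x − f y` is bounded by the sum of surrogate differences plus the total
coupling error. -/
theorem decomposed_regret_bound {n K : ℕ} (A : Fin n → Type*)
    [∀ i, Nonempty (A i)]
    (f : (∀ i, A i) → ℝ) (S : Fin K → Finset (Fin n))
    (hdisj : ∀ k l, k ≠ l → Disjoint (S k) (S l))
    (hcover : ∀ i, ∃ k, i ∈ S k)
    (xstar : ∀ i, A i)
    (g : Fin K → (∀ i, A i) → ℝ)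
    (hg : ∀ k (u : ∀ i, A i),
      g k u = f (fun i => if i ∈ S k then u i else xstar i))
    (c : Fin K → ℝ) (hc : ∀ k, 0 ≤ c k)
    (hcoupling : ∀ k (u v : ∀ i, A i), (∀ i, i ∉ S k → u i = v i) →
      |(f u - f v) - (g k u - g k v)| ≤ c k) :
    ∀ x y : (∀ i, A i),
      f x - f y ≤ (∑ k, (g k x - g k y)) + ∑ k, c k := by
  classical
  intro x y
  set hyb : ℕ → ∀ i, A i := fun m i =>
    if ∃ k : Fin K, (k : ℕ) < m ∧ i ∈ S k then x i else y i with hhyb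
  have h0 : hyb 0 = y := by
    funext i; simp [hhyb]
  have hK : hyb K = x := by
    funext i
    obtain ⟨k, hk⟩ := hcover i
    simp only [hhyb]
    rw [if_pos ⟨k, k.isLt, hk⟩]
  have step : ∀ m : Fin K,
      f (hyb ((m : ℕ) + 1)) - f (hyb (m : ℕ)) ≤ (g m x - g m y) + c m := by
    intro m
    have hagree : ∀ i, i ∉ S m → hyb ((m : ℕ) + 1) i = hyb (m : ℕ) i := by
      intro i hi
      simp only [hhyb]
      congr 1
      apply propext
      constructor
      · rintro ⟨k, hk, hik⟩
        refine ⟨k, ?_, hik⟩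
        rcases Nat.lt_succ_iff_lt_or_eq.mp hk with h | h
        · exact h
        · exact absurd hik (by rwa [show k = m from Fin.ext h])
      · rintro ⟨k, hk, hik⟩; exact ⟨k, Nat.lt_succ_of_lt hk, hik⟩
    have hgx : g m (hyb ((m : ℕ) + 1)) = g m x := by
      rw [hg, hg]
      congr 1
      funext i
      by_cases hi : i ∈ S m
      · simp only [hi, if_true, hhyb]
        rw [if_pos ⟨m, Nat.lt_succ_self _, hi⟩]
      · simp [hi]
    have hgy : g m (hyb (m : ℕ)) = g m y := by
      rw [hg, hg]
      congr 1
      funext i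
      by_cases hi : i ∈ S m
      · simp only [hi, if_true, hhyb]
        rw [if_neg]
        rintro ⟨k, hk, hik⟩
        have hne : k ≠ m := fun h => Nat.lt_irrefl _ (h ▸ hk)
        exact Finset.disjoint_left.mp (hdisj k m hne) hik hi
      · simp [hi]
    have h1 := (abs_le.mp (hcoupling m (hyb ((m : ℕ) + 1)) (hyb (m : ℕ)) hagree)).2
    rw [hgx, hgy] at h1
    linarith
  have tele : f x - f y = ∑ m ∈ Finset.range K, (f (hyb (m + 1)) - f (hyb m)) := by
    rw [Finset.sum_range_sub (fun m => f (hyb m)), h0, hK]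
  rw [tele, ← Fin.sum_univ_eq_sum_range (fun m => f (hyb (m + 1)) - f (hyb m)) K,
    ← Finset.sum_add_distrib]
  exact Finset.sum_le_sum fun m _ => step m
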